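/- For any separating tree T on [n], the minimal simple congruence ≡_∘ for which T is admissible (whose non-contracted arcs are the up and down arcs that are subarcs of mandatory arcs of T, together with their subarcs) is a permutree congruence; i.e., every subarc-minimal arc of 𝒜_n ∖ 𝒜_{≡_∘} has length exactly 2. Key step: if 1 ≤ i < j ≤ n with j - i > 2 and both u(i,j-1) and u(i+1,j) are subarcs of mandatory arcs of T, then u(i,j) is a subarc of a mandatory arc of T. -/

import Mathlib

open Relation Finset

/-- The undirected simple graph underlying a directed edge relation. -/
def dirGraph {α : Type*} (E : α → α → Prop) : SimpleGraph α where
  Adj a b := a ≠ b ∧ (E a b ∨ E b a)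
  symm := ⟨fun a b h => ⟨h.1.symm, h.2.symm⟩⟩
  loopless := ⟨fun a h => h.1 rfl⟩

/-- `x` lies in the subtree attached to `p` at `j`: every walk from `x` to `j`
passes through `p`. -/
def inSub {α : Type*} (E : α → α → Prop) (j p x : α) : Prop :=
  ∀ w : (dirGraph E).Walk x j, p ∈ w.support

def atMostTwo {α : Type*} (s : Set α) : Prop :=
  ∀ a ∈ s, ∀ b ∈ s, ∀ c ∈ s, a = b ∨ a = c ∨ b = c

/-- A separating tree on `[n]`, encoded by its directed edge relation
(`E a b` means there is an edge directed from `a` to `b`, i.e. `b` is a parent of `a`). -/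
def IsSepTree {n : ℕ} (E : Fin n → Fin n → Prop) : Prop :=
  (dirGraph E).IsTree ∧
  (∀ j, atMostTwo {p | E j p}) ∧
  (∀ j, atMostTwo {c | E c j}) ∧
  (∀ j p₁ p₂, E j p₁ → E j p₂ → p₁ ≠ p₂ →
    ∀ x₁ x₂, inSub E j p₁ x₁ → inSub E j p₂ x₂ →
      (x₁ < j ∧ j < x₂) ∨ (x₂ < j ∧ j < x₁)) ∧
  (∀ j c₁ c₂, E c₁ j → E c₂ j → c₁ ≠ c₂ →
    ∀ x₁ x₂, inSub E j c₁ x₁ → inSub E j c₂ x₂ →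
      (x₁ < j ∧ j < x₂) ∨ (x₂ < j ∧ j < x₁))
/-- An arc `(a, b, A, B)` on `[n]`: endpoints `a < b` and a partition
`A ⊔ B` of the open interval `]a, b[`. -/
structure Arc (n : ℕ) where
  a : Fin n
  b : Fin n
  A : Finset (Fin n)
  B : Finset (Fin n)
  hab : a < b
  hdisj : Disjoint A B
  hunion : A ∪ B = Finset.Ioo a b

/-- `Subarc α β` : `α` is a subarc of `β`. -/
def Subarc {n : ℕ} (α β : Arc n) : Prop :=
  β.a ≤ α.a ∧ α.b ≤ β.b ∧ α.A ⊆ β.A ∧ α.B ⊆ β.B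

/-- An arc ideal: a lower set for the subarc order. -/
def IsArcIdeal {n : ℕ} (I : Set (Arc n)) : Prop :=
  ∀ α β : Arc n, Subarc α β → β ∈ I → α ∈ I

/-- An ideal is essential when it contains all basic arcs `(i, i+1, ∅, ∅)`. -/
def EssentialIdeal {n : ℕ} (I : Set (Arc n)) : Prop :=
  ∀ α : Arc n, (α.b : ℕ) = (α.a : ℕ) + 1 → α ∈ I

/-- `α` is a subarc-minimal arc of the complement of `I`. -/
def MinNonArc {n : ℕ} (I : Set (Arc n)) (α : Arc n) : Prop :=
  α ∉ I ∧ ∀ β : Arc n, Subarc β α → β ∉ I → β = α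

/-- An ideal is simple when all subarc-minimal arcs of its complement are
up arcs (`B = ∅`) or down arcs (`A = ∅`). -/
def SimpleIdeal {n : ℕ} (I : Set (Arc n)) : Prop :=
  ∀ α : Arc n, MinNonArc I α → α.B = ∅ ∨ α.A = ∅
/-- A mandatory arc of a separating tree `E`: one arc per edge of the tree between
`α.a < α.b`, where `A` (resp. `B`) records the intermediate values admitting a
directed path to the edge (resp. from the edge). -/
def MandatoryArc {n : ℕ} (E : Fin n → Fin n → Prop) (α : Arc n) : Prop :=
  (E α.a α.b ∨ E α.b α.a) ∧
  ∀ j : Fin n, α.a < j → j < α.b →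
    ((j ∈ α.A ↔ (Relation.ReflTransGen E j α.a ∨ Relation.ReflTransGen E j α.b)) ∧
     (j ∈ α.B ↔ (Relation.ReflTransGen E α.a j ∨ Relation.ReflTransGen E α.b j)))

/-- A forbidden up arc of a separating tree `E`: the up arc `u(M, m)` where
`M = max L`, `m = min R` for two ancestor subtrees `L < R` of a node `j`. -/
def ForbiddenUpArc {n : ℕ} (E : Fin n → Fin n → Prop) (α : Arc n) : Prop :=
  α.B = ∅ ∧ ∃ j p₁ p₂ : Fin n, E j p₁ ∧ E j p₂ ∧ p₁ ≠ p₂ ∧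
    inSub E j p₁ α.a ∧ (∀ x, inSub E j p₁ x → x ≤ α.a) ∧
    inSub E j p₂ α.b ∧ (∀ x, inSub E j p₂ x → α.b ≤ x)

/-- A forbidden down arc of a separating tree `E`: the down arc `d(M, m)` where
`M = max L`, `m = min R` for two descendant subtrees `L < R` of a node `j`. -/
def ForbiddenDownArc {n : ℕ} (E : Fin n → Fin n → Prop) (α : Arc n) : Prop :=
  α.A = ∅ ∧ ∃ j c₁ c₂ : Fin n, E c₁ j ∧ E c₂ j ∧ c₁ ≠ c₂ ∧
    inSub E j c₁ α.a ∧ (∀ x, inSub E j c₁ x → x ≤ α.a) ∧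
    inSub E j c₂ α.b ∧ (∀ x, inSub E j c₂ x → α.b ≤ x)

/-- A separating tree is `I`-admissible when the arc ideal `I` contains all its
mandatory arcs and none of its forbidden arcs. -/
def AdmissibleTree {n : ℕ} (I : Set (Arc n)) (E : Fin n → Fin n → Prop) : Prop :=
  IsSepTree E ∧
  (∀ α : Arc n, MandatoryArc E α → α ∈ I) ∧
  (∀ α : Arc n, ForbiddenUpArc E α ∨ ForbiddenDownArc E α → α ∉ I)

/-- `σ` is a linear extension of the directed tree `E`: `σ p` is the value at
position `p`, and each directed edge goes from an earlier to a later value. -/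
def IsLinExt {n : ℕ} (E : Fin n → Fin n → Prop) (σ : Equiv.Perm (Fin n)) : Prop :=
  ∀ a b : Fin n, E a b → σ.symm a < σ.symm b
/-- The arc ideal of the minimal simple congruence `≡_∘` for which the separating
tree `E` is admissible: its complement is the upper ideal generated by the up and
down arcs which are not subarcs of any mandatory arc of `E`. -/
def treeMinIdeal {n : ℕ} (E : Fin n → Fin n → Prop) : Set (Arc n) :=
  {α | ¬ ∃ γ : Arc n, Subarc γ α ∧ (γ.B = ∅ ∨ γ.A = ∅) ∧
        ¬ ∃ β : Arc n, MandatoryArc E β ∧ Subarc γ β}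

/-- The arc ideal of the maximal simple congruence `≡_•` for which the separating
tree `E` is admissible: its complement is the upper ideal generated by the
forbidden arcs of `E`. -/
def treeMaxIdeal {n : ℕ} (E : Fin n → Fin n → Prop) : Set (Arc n) :=
  {α | ¬ ∃ γ : Arc n, Subarc γ α ∧ (ForbiddenUpArc E γ ∨ ForbiddenDownArc E γ)}

/-- `γ` is the up arc `u(x, y)`. -/
def UpArcBetween {n : ℕ} (x y : Fin n) (γ : Arc n) : Prop :=
  γ.a = x ∧ γ.b = y ∧ γ.B = ∅

/-!
For an edge `{a, b}` of a separating tree and `a < j < b`, the tree path from `j` to the nearer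
endpoint cannot turn, since the separation condition at the turning vertex would put that vertex
strictly between `j` and both endpoints. So `j` lies below or above the edge, and not both. Hence
`u(x, y)` is a subarc of a mandatory arc iff some edge spans `[x, y]` with all of `]x, y[` below it.

A subarc-minimal arc outside the ideal is an up or down arc lying in no mandatory arc; reversing
the tree exchanges the two kinds, so say it is `u(x, y)`. Some edge crosses `[x, x + 1]`, so
`y ≠ x + 1`; and if `y > x + 2`, the key step shows that `u(x, y - 1)` or `u(x + 1, y)` lies in no
mandatory arc either, contradicting minimality.
-/

open SimpleGraph

section DirectedWalks

variable {V : Type*} {G : SimpleGraph V} {r : V → V → Prop}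

def IsDirectedWalk (r : V → V → Prop) {u v : V} (p : G.Walk u v) : Prop :=
  ∀ d ∈ p.darts, r d.fst d.snd

@[simp]
lemma isDirectedWalk_nil {u : V} : IsDirectedWalk r (Walk.nil : G.Walk u u) := by
  simp [IsDirectedWalk]

@[simp]
lemma isDirectedWalk_cons {u v w : V} (h : G.Adj u v) (p : G.Walk v w) :
    IsDirectedWalk r (Walk.cons h p) ↔ r u v ∧ IsDirectedWalk r p := by
  simp [IsDirectedWalk]

lemma isDirectedWalk_reverse {u v : V} {p : G.Walk u v} :
    IsDirectedWalk r p.reverse ↔ IsDirectedWalk (Function.swap r) p := by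
  simp only [IsDirectedWalk, Walk.darts_reverse, List.mem_reverse, List.mem_map]
  constructor
  · rintro h d hd
    simpa using h d.symm ⟨d, hd, rfl⟩
  · rintro h _ ⟨d, hd, rfl⟩
    exact h d hd

lemma IsDirectedWalk.of_concat {u v w : V} {p : G.Walk u v} {h : G.Adj v w}
    (hp : IsDirectedWalk r (p.concat h)) : IsDirectedWalk r p :=
  fun d hd => hp d (by simp [Walk.darts_concat, hd])

lemma IsDirectedWalk.and {s : V → V → Prop} {u v : V} {p : G.Walk u v}
    (hr : IsDirectedWalk r p) (hs : IsDirectedWalk s p) :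
    IsDirectedWalk (fun a b => r a b ∧ s a b) p :=
  fun d hd => ⟨hr d hd, hs d hd⟩

lemma IsDirectedWalk.reflTransGen {u v : V} {p : G.Walk u v} (hp : IsDirectedWalk r p) :
    ∀ c ∈ p.support, ReflTransGen r u c := by
  induction p with
  | nil => simp [ReflTransGen.refl]
  | cons h q ih =>
    rw [isDirectedWalk_cons] at hp
    simp only [Walk.support_cons, List.mem_cons, forall_eq_or_imp]
    exact ⟨.refl, fun c hc => .head hp.1 (ih hp.2 c hc)⟩

lemma IsDirectedWalk.reflTransGen_end {u v : V} {p : G.Walk u v} (hp : IsDirectedWalk r p) :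
    ReflTransGen r u v :=
  hp.reflTransGen v p.end_mem_support

lemma IsDirectedWalk.reflTransGen_of_swap {u v : V} {p : G.Walk u v}
    (hp : IsDirectedWalk (Function.swap r) p) : ReflTransGen r v u :=
  (isDirectedWalk_reverse.mpr hp).reflTransGen_end

lemma IsDirectedWalk.exists_mem_support_rel {u v : V} {p : G.Walk u v}
    (hp : IsDirectedWalk r p) (huv : u ≠ v) : ∃ w ∈ p.support, r w v := by
  induction p with
  | nil => exact absurd rfl huv
  | @cons u m v h q ih =>
    rw [isDirectedWalk_cons] at hp
    by_cases hmv : m = v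
    · subst hmv
      exact ⟨u, by simp, hp.1⟩
    · obtain ⟨w, hw, hwv⟩ := ih hp.2 hmv
      exact ⟨w, by simp [hw], hwv⟩

lemma SimpleGraph.IsAcyclic.support_subset_of_isPath (hG : G.IsAcyclic) {u v : V} {p : G.Walk u v}
    (hp : p.IsPath) (q : G.Walk u v) : p.support ⊆ q.support := by
  classical
  obtain rfl : p = q.bypass :=
    congrArg Subtype.val ((hG.subsingleton_path u v).elim ⟨p, hp⟩ ⟨q.bypass, q.bypass_isPath⟩)
  exact q.support_bypass_subset_support

def HasTurn (r : V → V → Prop) {u v : V} (p : G.Walk u v) : Prop :=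
  ∃ (x y z : V) (q₁ : G.Walk u y) (q₂ : G.Walk y v), p = q₁.append q₂ ∧
    x ∈ q₁.support ∧ z ∈ q₂.support ∧ x ≠ z ∧ ((r y x ∧ r y z) ∨ (r x y ∧ r z y))

lemma HasTurn.cons {u v w : V} (h : G.Adj u v) {p : G.Walk v w} (hp : HasTurn r p) :
    HasTurn r (Walk.cons h p) := by
  obtain ⟨x, y, z, q₁, q₂, rfl, hx, hz, hxz, hturn⟩ := hp
  exact ⟨x, y, z, .cons h q₁, q₂, rfl, by simp [hx], hz, hxz, hturn⟩

lemma hasTurn_swap {u v : V} {p : G.Walk u v} : HasTurn (Function.swap r) p ↔ HasTurn r p := by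
  simp only [HasTurn, Function.swap, or_comm]

lemma SimpleGraph.Walk.IsPath.isDirectedWalk_cons_or_hasTurn (hr : ∀ a b, G.Adj a b → r a b ∨ r b a)
    {u v w : V} {h : G.Adj u v} {p : G.Walk v w} (hp : (Walk.cons h p).IsPath)
    (hdir : IsDirectedWalk r p) :
    IsDirectedWalk r (Walk.cons h p) ∨ IsDirectedWalk (Function.swap r) (Walk.cons h p) ∨
      HasTurn r (Walk.cons h p) := by
  by_cases huv : r u v
  · exact Or.inl ((isDirectedWalk_cons h p).mpr ⟨huv, hdir⟩)
  have hvu : r v u := (hr u v h).resolve_left huv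
  cases p with
  | nil => exact Or.inr (Or.inl (by simpa [Function.swap] using hvu))
  | @cons _ t _ h' p' =>
    have hut : u ≠ t := by
      rintro rfl
      simp at hp
    refine Or.inr (Or.inr ⟨u, v, t, .cons h .nil, .cons h' p', rfl, by simp, by simp, hut, ?_⟩)
    exact Or.inl ⟨hvu, ((isDirectedWalk_cons h' p').mp hdir).1⟩

lemma SimpleGraph.Walk.IsPath.isDirectedWalk_or_hasTurn (hr : ∀ a b, G.Adj a b → r a b ∨ r b a)
    {u v : V} {p : G.Walk u v} (hp : p.IsPath) :
    IsDirectedWalk r p ∨ IsDirectedWalk (Function.swap r) p ∨ HasTurn r p := by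
  induction p with
  | nil => exact Or.inl isDirectedWalk_nil
  | cons h q ih =>
    rcases ih hp.of_cons with hf | hb | ht
    · exact hp.isDirectedWalk_cons_or_hasTurn hr hf
    · rcases hp.isDirectedWalk_cons_or_hasTurn (fun a b hab => (hr a b hab).symm) hb with
        hb' | hf' | ht'
      · exact Or.inr (Or.inl hb')
      · exact Or.inl hf'
      · exact Or.inr (Or.inr (hasTurn_swap.mp ht'))
    · exact Or.inr (Or.inr (ht.cons h))

end DirectedWalks

section DirGraph

variable {α : Type*} {E : α → α → Prop}

lemma dirGraph_swap : dirGraph (Function.swap E) = dirGraph E := by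
  ext a b
  exact and_congr_right fun _ => or_comm

lemma exists_isPath_isDirectedWalk {u v : α} (h : ReflTransGen E u v) :
    ∃ p : (dirGraph E).Walk u v, p.IsPath ∧ IsDirectedWalk E p := by
  classical
  induction h using ReflTransGen.head_induction_on with
  | refl => exact ⟨.nil, .nil, isDirectedWalk_nil⟩
  | @head u m hum _ ih =>
    obtain ⟨p, hp, hdir⟩ := ih
    by_cases hu : u ∈ p.support
    · exact ⟨p.dropUntil u hu, hp.dropUntil hu,
        fun d hd => hdir d (p.darts_dropUntil_subset_darts hu hd)⟩
    · have hadj : (dirGraph E).Adj u m := ⟨fun h => hu (h ▸ p.start_mem_support), Or.inl hum⟩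
      exact ⟨.cons hadj p, hp.cons hu, (isDirectedWalk_cons hadj p).mpr ⟨hum, hdir⟩⟩

lemma isDirectedWalk_of_isPath (hA : (dirGraph E).IsAcyclic) {u v : α}
    (h : ReflTransGen E u v) {p : (dirGraph E).Walk u v} (hp : p.IsPath) :
    IsDirectedWalk E p := by
  obtain ⟨q, hq, hdir⟩ := exists_isPath_isDirectedWalk h
  obtain rfl : p = q := congrArg Subtype.val ((hA.subsingleton_path u v).elim ⟨p, hp⟩ ⟨q, hq⟩)
  exact hdir

lemma inSub_of_mem_support (hA : (dirGraph E).IsAcyclic) {x v w : α}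
    {p : (dirGraph E).Walk x v} (hp : p.IsPath) (hw : w ∈ p.support) : inSub E v w x :=
  fun q => hA.support_subset_of_isPath hp q hw

lemma inSub_self (v w : α) : inSub E v w w := fun q => q.start_mem_support

lemma exists_isPath_notMem_support (hT : (dirGraph E).IsTree) {a b : α}
    (hab : (dirGraph E).Adj a b) (j : α) :
    ∃ (c d : α) (p : (dirGraph E).Walk j c), ((c = a ∧ d = b) ∨ (c = b ∧ d = a)) ∧
      p.IsPath ∧ d ∉ p.support := by
  obtain ⟨p, hp, -⟩ := hT.existsUnique_path j a
  by_cases hb : b ∈ p.support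
  · obtain ⟨q, hq, -⟩ := hT.existsUnique_path j b
    exact ⟨b, a, q, Or.inr ⟨rfl, rfl⟩, hq,
      hT.isAcyclic.ne_mem_support_of_support_of_adj_of_isPath hp hq hab hb⟩
  · exact ⟨a, b, p, Or.inl ⟨rfl, rfl⟩, hp, hb⟩
def IsBelowEdge (E : α → α → Prop) (a b j : α) : Prop :=
  ReflTransGen E j a ∨ ReflTransGen E j b

def IsAboveEdge (E : α → α → Prop) (a b j : α) : Prop :=
  ReflTransGen E a j ∨ ReflTransGen E b j

lemma isBelowEdge_comm {a b j : α} : IsBelowEdge E a b j ↔ IsBelowEdge E b a j := or_comm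

lemma isAboveEdge_comm {a b j : α} : IsAboveEdge E a b j ↔ IsAboveEdge E b a j := or_comm

lemma IsBelowEdge.isDirectedWalk_of_near (hA : (dirGraph E).IsAcyclic) {j c d : α}
    (hcd : (dirGraph E).Adj c d) {p : (dirGraph E).Walk j c} (hp : p.IsPath)
    (hd : d ∉ p.support) (h : IsBelowEdge E c d j) : IsDirectedWalk E p := by
  rcases h with h | h
  · exact isDirectedWalk_of_isPath hA h hp
  · exact (isDirectedWalk_of_isPath hA h (hp.concat hd hcd)).of_concat

lemma IsAboveEdge.isDirectedWalk_swap_of_near (hA : (dirGraph E).IsAcyclic) {j c d : α}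
    (hcd : (dirGraph E).Adj c d) {p : (dirGraph E).Walk j c} (hp : p.IsPath)
    (hd : d ∉ p.support) (h : IsAboveEdge E c d j) : IsDirectedWalk (Function.swap E) p := by
  rcases h with h | h
  · exact isDirectedWalk_reverse.mp (isDirectedWalk_of_isPath hA h hp.reverse)
  · exact (isDirectedWalk_reverse.mp
      (isDirectedWalk_of_isPath hA h (hp.concat hd hcd).reverse)).of_concat

end DirGraph

section SeparatingTree

variable {n : ℕ} {E : Fin n → Fin n → Prop}

lemma IsSepTree.separates (hE : IsSepTree E) {x y z w₁ w₂ : Fin n} (hxz : x ≠ z)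
    (hturn : (E y x ∧ E y z) ∨ (E x y ∧ E z y)) (h₁ : inSub E y x w₁) (h₂ : inSub E y z w₂) :
    (w₁ < y ∧ y < w₂) ∨ (w₂ < y ∧ y < w₁) := by
  rcases hturn with ⟨hx, hz⟩ | ⟨hx, hz⟩
  · exact hE.2.2.2.1 y x z hx hz hxz w₁ w₂ h₁ h₂
  · exact hE.2.2.2.2 y x z hx hz hxz w₁ w₂ h₁ h₂

lemma IsSepTree.swap (hE : IsSepTree E) : IsSepTree (Function.swap E) := by
  obtain ⟨hT, hpar, hchild, hsep_par, hsep_child⟩ := hE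
  have hsub : inSub (Function.swap E) = inSub E := by
    funext j p x
    unfold inSub
    rw [dirGraph_swap]
  refine ⟨dirGraph_swap ▸ hT, hchild, hpar, ?_, ?_⟩ <;> rw [hsub]
  exacts [hsep_child, hsep_par]

lemma IsSepTree.reflTransGen_or_reflTransGen_of_near (hE : IsSepTree E) {j c d : Fin n}
    (hcd : E c d ∨ E d c) (hj : (c < j ∧ j < d) ∨ (d < j ∧ j < c))
    {p : (dirGraph E).Walk j c} (hp : p.IsPath) (hd : d ∉ p.support) :
    ReflTransGen E j c ∨ ReflTransGen E c j := by
  have hA := hE.1.isAcyclic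
  rcases hp.isDirectedWalk_or_hasTurn (fun _ _ (h : (dirGraph E).Adj _ _) => h.2) with
    hf | hb | ⟨x, y, z, q₁, q₂, rfl, hx, hz, hxz, hturn⟩
  · exact Or.inl hf.reflTransGen_end
  · exact Or.inr hb.reflTransGen_of_swap
  have hdc : (dirGraph E).Adj d c := ⟨by rintro rfl; omega, hcd.symm⟩
  have hq₂ : q₂.reverse.IsPath := hp.of_append_right.reverse
  have hdq₂ : d ∉ q₂.reverse.support := fun h =>
    hd (q₁.support_subset_support_append_right q₂ (by simpa using h))
  have hjy := hE.separates hxz hturn (inSub_of_mem_support hA hp.of_append_left hx)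
    (inSub_of_mem_support hA hq₂ (by simpa using hz) : inSub E y z c)
  have hdy := hE.separates hxz hturn (inSub_of_mem_support hA hp.of_append_left hx)
    (inSub_of_mem_support hA (hq₂.cons hdq₂ (h := hdc)) (by simp [hz]) : inSub E y z d)
  omega

lemma IsSepTree.not_isBelowEdge_and_isAboveEdge_of_near (hE : IsSepTree E) {j c d : Fin n}
    (hcd : E c d ∨ E d c) (hj : (c < j ∧ j < d) ∨ (d < j ∧ j < c))
    {p : (dirGraph E).Walk j c} (hp : p.IsPath) (hd : d ∉ p.support)
    (hbelow : IsBelowEdge E c d j) (habove : IsAboveEdge E c d j) : False := by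
  have hA := hE.1.isAcyclic
  have hadj : (dirGraph E).Adj c d := ⟨by rintro rfl; omega, hcd⟩
  have hjc : j ≠ c := by rintro rfl; omega
  obtain ⟨w, hw, hwc, hcw⟩ := ((hbelow.isDirectedWalk_of_near hA hadj hp hd).and
    (habove.isDirectedWalk_swap_of_near hA hadj hp hd)).exists_mem_support_rel hjc
  have hturn : (E c w ∧ E c d) ∨ (E w c ∧ E d c) := hcd.imp (⟨hcw, ·⟩) (⟨hwc, ·⟩)
  have := hE.separates (by rintro rfl; exact hd hw) hturn (inSub_of_mem_support hA hp hw)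
    (inSub_self c d)
  omega

lemma IsSepTree.isBelowEdge_or_isAboveEdge (hE : IsSepTree E) {a b j : Fin n}
    (he : E a b ∨ E b a) (h₁ : a < j) (h₂ : j < b) :
    IsBelowEdge E a b j ∨ IsAboveEdge E a b j := by
  obtain ⟨c, d, p, hcd, hp, hd⟩ := exists_isPath_notMem_support hE.1 ⟨(h₁.trans h₂).ne, he⟩ j
  rcases hcd with ⟨rfl, rfl⟩ | ⟨rfl, rfl⟩
  · exact (hE.reflTransGen_or_reflTransGen_of_near he (.inl ⟨h₁, h₂⟩) hp hd).imp .inl .inl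
  · exact (hE.reflTransGen_or_reflTransGen_of_near he.symm (.inr ⟨h₁, h₂⟩) hp hd).imp .inr .inr

lemma IsSepTree.not_isBelowEdge_and_isAboveEdge (hE : IsSepTree E) {a b j : Fin n}
    (he : E a b ∨ E b a) (h₁ : a < j) (h₂ : j < b) :
    ¬(IsBelowEdge E a b j ∧ IsAboveEdge E a b j) := by
  rintro ⟨hbelow, habove⟩
  obtain ⟨c, d, p, hcd, hp, hd⟩ := exists_isPath_notMem_support hE.1 ⟨(h₁.trans h₂).ne, he⟩ j
  rcases hcd with ⟨rfl, rfl⟩ | ⟨rfl, rfl⟩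
  · exact hE.not_isBelowEdge_and_isAboveEdge_of_near he (.inl ⟨h₁, h₂⟩) hp hd hbelow habove
  · exact hE.not_isBelowEdge_and_isAboveEdge_of_near he.symm (.inr ⟨h₁, h₂⟩) hp hd
      (isBelowEdge_comm.mp hbelow) (isAboveEdge_comm.mp habove)

lemma IsSepTree.exists_mandatoryArc (hE : IsSepTree E) {a b : Fin n} (hab : a < b)
    (he : E a b ∨ E b a) : ∃ β : Arc n, MandatoryArc E β ∧ β.a = a ∧ β.b = b := by
  classical
  refine ⟨⟨a, b, (Ioo a b).filter (IsBelowEdge E a b), (Ioo a b).filter (¬IsBelowEdge E a b ·),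
    hab, disjoint_filter_filter_not _ _ _, filter_union_filter_not_eq _ _⟩,
    ⟨he, fun j h₁ h₂ => ?_⟩, rfl, rfl⟩
  simp only [mem_filter, mem_Ioo, h₁, h₂, true_and]
  refine ⟨Iff.rfl, fun hbelow => ?_, fun habove hbelow => ?_⟩
  · exact (hE.isBelowEdge_or_isAboveEdge he h₁ h₂).resolve_left hbelow
  · exact hE.not_isBelowEdge_and_isAboveEdge he h₁ h₂ ⟨hbelow, habove⟩

end SeparatingTree

section KeyStep

variable {n : ℕ} {E : Fin n → Fin n → Prop}

/-- A directed path from `j` to `d` avoiding `c` would make `j` hang below `d` through a child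
other than `c`, and the separation at `d` would put `j` and `c` on opposite sides of `d`. -/
lemma IsSepTree.reflTransGen_source_of_reflTransGen_target (hE : IsSepTree E) {j c d : Fin n}
    (hcd : E c d) (hj : (c < j ∧ j < d) ∨ (d < j ∧ j < c)) (h : ReflTransGen E j d) :
    ReflTransGen E j c := by
  obtain ⟨p, hp, hdir⟩ := exists_isPath_isDirectedWalk h
  by_cases hc : c ∈ p.support
  · exact hdir.reflTransGen c hc
  obtain ⟨w, hw, hwd⟩ := hdir.exists_mem_support_rel (by rintro rfl; omega)
  have := hE.separates (by rintro rfl; exact hc hw) (.inr ⟨hwd, hcd⟩)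
    (inSub_of_mem_support hE.1.isAcyclic hp hw) (inSub_self d c)
  omega

lemma IsSepTree.reflTransGen_of_isBelowEdge_of_isAboveEdge (hE : IsSepTree E)
    {a b j k : Fin n} (he : E a b ∨ E b a) (h₁ : a < j) (h₂ : j < b)
    (hj : IsBelowEdge E a b j) (hk : IsAboveEdge E a b k) : ReflTransGen E j k := by
  rcases he with hab | hba
  · have hja : ReflTransGen E j a :=
      hj.elim id (hE.reflTransGen_source_of_reflTransGen_target hab (.inl ⟨h₁, h₂⟩))
    exact hk.elim hja.trans (hja.tail hab).trans
  · have hjb : ReflTransGen E j b :=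
      hj.elim (hE.reflTransGen_source_of_reflTransGen_target hba (.inr ⟨h₁, h₂⟩)) id
    exact hk.elim (hjb.tail hba).trans hjb.trans

def upArc (x y : Fin n) (hxy : x < y) : Arc n :=
  ⟨x, y, Ioo x y, ∅, hxy, disjoint_empty_right _, union_empty _⟩

lemma upArcBetween_upArc (x y : Fin n) (hxy : x < y) : UpArcBetween x y (upArc x y hxy) :=
  ⟨rfl, rfl, rfl⟩

lemma Arc.A_eq_Ioo_of_B_eq_empty {α : Arc n} (hB : α.B = ∅) : α.A = Ioo α.a α.b := by
  rw [← α.hunion, hB, union_empty]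

def UpSubarcOfMandatory (E : Fin n → Fin n → Prop) (x y : Fin n) : Prop :=
  ∃ γ β : Arc n, UpArcBetween x y γ ∧ MandatoryArc E β ∧ Subarc γ β

lemma UpSubarcOfMandatory.exists_edge {x y : Fin n} (h : UpSubarcOfMandatory E x y) :
    ∃ a b : Fin n, (E a b ∨ E b a) ∧ a ≤ x ∧ y ≤ b ∧
      ∀ j, x < j → j < y → IsBelowEdge E a b j := by
  obtain ⟨γ, β, ⟨rfl, rfl, hB⟩, hm, hsub⟩ := h
  refine ⟨β.a, β.b, hm.1, hsub.1, hsub.2.1, fun j h₁ h₂ => ?_⟩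
  have hjA : j ∈ γ.A := by rw [γ.A_eq_Ioo_of_B_eq_empty hB, mem_Ioo]; exact ⟨h₁, h₂⟩
  exact (hm.2 j (hsub.1.trans_lt h₁) (h₂.trans_le hsub.2.1)).1.mp (hsub.2.2.1 hjA)

lemma IsSepTree.upSubarcOfMandatory_of_edge (hE : IsSepTree E) {x y a b : Fin n}
    (hxy : x < y) (he : E a b ∨ E b a) (hax : a ≤ x) (hyb : y ≤ b)
    (hbelow : ∀ j, x < j → j < y → IsBelowEdge E a b j) : UpSubarcOfMandatory E x y := by
  obtain ⟨β, hm, rfl, rfl⟩ := hE.exists_mandatoryArc (hax.trans_lt (hxy.trans_le hyb)) he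
  refine ⟨upArc x y hxy, β, upArcBetween_upArc x y hxy, hm, hax, hyb, fun j hj => ?_,
    by simp [upArc]⟩
  rw [upArc, mem_Ioo] at hj
  exact (hm.2 j (hax.trans_lt hj.1) (hj.2.trans_le hyb)).1.mpr (hbelow j hj.1 hj.2)

lemma IsSepTree.upSubarcOfMandatory_or_isAboveEdge (hE : IsSepTree E) {x y a b k : Fin n}
    (he : E a b ∨ E b a) (hax : a ≤ x) (hyb : y ≤ b) (hxk : x < k) (hky : k < y)
    (hbelow : ∀ j, x < j → j < y → j ≠ k → IsBelowEdge E a b j) :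
    UpSubarcOfMandatory E x y ∨ IsAboveEdge E a b k := by
  refine (hE.isBelowEdge_or_isAboveEdge he (hax.trans_lt hxk) (hky.trans_le hyb)).imp
    (fun hk => ?_) id
  refine hE.upSubarcOfMandatory_of_edge (hxk.trans hky) he hax hyb fun j h₁ h₂ => ?_
  by_cases hjk : j = k
  · exact hjk ▸ hk
  · exact hbelow j h₁ h₂ hjk

/-- If neither edge covers `u(x, y)`, then `x'` lies below the first edge and above the
second while `y'` lies above the first and below the second. Through the first edge this
gives `x' ⇝ y'`, which makes `x'` (or `y'`, if `x'` is an endpoint of the second edge)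
both below and above the second edge. -/
theorem IsSepTree.upSubarcOfMandatory_of_inner (hE : IsSepTree E) {x x' y' y : Fin n}
    (hx' : (x' : ℕ) = x + 1) (hy : (y : ℕ) = y' + 1) (hxy : (x : ℕ) + 2 < y)
    (h₁ : UpSubarcOfMandatory E x y') (h₂ : UpSubarcOfMandatory E x' y) :
    UpSubarcOfMandatory E x y := by
  obtain ⟨a₁, b₁, he₁, hax₁, hyb₁, hbelow₁⟩ := h₁.exists_edge
  obtain ⟨a₂, b₂, he₂, hax₂, hyb₂, hbelow₂⟩ := h₂.exists_edge
  by_contra hnot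
  have hx'_below₁ : IsBelowEdge E a₁ b₁ x' := hbelow₁ x' (by omega) (by omega)
  have hy'_below₂ : IsBelowEdge E a₂ b₂ y' := hbelow₂ y' (by omega) (by omega)
  have hy'_above₁ : IsAboveEdge E a₁ b₁ y' := by
    rcases (show y ≤ b₁ ∨ b₁ = y' by omega) with hyb | rfl
    · refine (hE.upSubarcOfMandatory_or_isAboveEdge he₁ hax₁ hyb (by omega) (by omega)
        fun j h₁ h₂ hj => hbelow₁ j h₁ (by omega)).resolve_left hnot
    · exact .inr .refl
  have hx'_above₂ : IsAboveEdge E a₂ b₂ x' := by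
    rcases (show a₂ ≤ x ∨ a₂ = x' by omega) with hax | rfl
    · refine (hE.upSubarcOfMandatory_or_isAboveEdge he₂ hax hyb₂ (by omega) (by omega)
        fun j h₁ h₂ hj => hbelow₂ j (by omega) h₂).resolve_left hnot
    · exact .inl .refl
  have hx'y' : ReflTransGen E x' y' := hE.reflTransGen_of_isBelowEdge_of_isAboveEdge he₁
    (by omega) (by omega) hx'_below₁ hy'_above₁
  rcases (show a₂ = x' ∨ a₂ < x' by omega) with rfl | ha₂
  · exact hE.not_isBelowEdge_and_isAboveEdge he₂ (by omega) (by omega)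
      ⟨hy'_below₂, .inl hx'y'⟩
  · exact hE.not_isBelowEdge_and_isAboveEdge he₂ ha₂ (by omega)
      ⟨hy'_below₂.imp hx'y'.trans hx'y'.trans, hx'_above₂⟩

end KeyStep

section MinimalArcs

variable {n : ℕ} {E : Fin n → Fin n → Prop}

lemma IsSepTree.upSubarcOfMandatory_of_succ (hE : IsSepTree E) {x y : Fin n}
    (hxy : (y : ℕ) = x + 1) : UpSubarcOfMandatory E x y := by
  obtain ⟨p⟩ := hE.1.connected.preconnected x y
  obtain ⟨d, -, hdx, hxd⟩ := p.exists_boundary_dart {w | w ≤ x} (le_refl x) (by simp; omega)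
  simp only [Set.mem_ofPred_eq, not_le] at hdx hxd
  exact hE.upSubarcOfMandatory_of_edge (by omega) d.adj.2 hdx (by omega) fun j _ _ => by omega

lemma IsSepTree.length_eq_two_of_minimal (hE : IsSepTree E) {x y : Fin n} (hxy : x < y)
    (hnot : ¬UpSubarcOfMandatory E x y)
    (hmin : ∀ c d, c < d → x ≤ c → d ≤ y → ¬UpSubarcOfMandatory E c d → c = x ∧ d = y) :
    (y : ℕ) = x + 2 := by
  have hne : (y : ℕ) ≠ x + 1 := fun h => hnot (hE.upSubarcOfMandatory_of_succ h)
  by_contra hne'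
  obtain ⟨x', hx'⟩ : ∃ x' : Fin n, (x' : ℕ) = x + 1 := ⟨⟨x + 1, by omega⟩, rfl⟩
  obtain ⟨y', hy'⟩ : ∃ y' : Fin n, (y : ℕ) = y' + 1 := ⟨⟨y - 1, by omega⟩, by simp; omega⟩
  refine hnot (hE.upSubarcOfMandatory_of_inner hx' hy' (by omega) ?_ ?_) <;> by_contra h
  · have := (hmin x y' (by omega) le_rfl (by omega) h).2
    omega
  · have := (hmin x' y (by omega) (by omega) le_rfl h).1
    omega

lemma upSubarcOfMandatory_iff_of_B_eq_empty {γ : Arc n} (hB : γ.B = ∅) :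
    UpSubarcOfMandatory E γ.a γ.b ↔ ∃ β, MandatoryArc E β ∧ Subarc γ β := by
  constructor
  · rintro ⟨γ', β, ⟨ha, hb, hB'⟩, hm, hsub⟩
    refine ⟨β, hm, ha ▸ hsub.1, hb ▸ hsub.2.1, ?_, by simp [hB]⟩
    rw [γ.A_eq_Ioo_of_B_eq_empty hB, ← ha, ← hb, ← γ'.A_eq_Ioo_of_B_eq_empty hB']
    exact hsub.2.2.1
  · rintro ⟨β, hm, hsub⟩
    exact ⟨γ, β, ⟨rfl, rfl, hB⟩, hm, hsub⟩

lemma Subarc.refl (α : Arc n) : Subarc α α := ⟨le_rfl, le_rfl, subset_rfl, subset_rfl⟩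

lemma not_mem_treeMinIdeal {γ : Arc n} (hγ : γ.B = ∅ ∨ γ.A = ∅)
    (h : ¬∃ β, MandatoryArc E β ∧ Subarc γ β) : γ ∉ treeMinIdeal E :=
  fun hI => hI ⟨γ, Subarc.refl γ, hγ, h⟩

lemma MinNonArc.upOrDown_and_not_subarc_mandatory {α : Arc n}
    (hα : MinNonArc (treeMinIdeal E) α) :
    (α.B = ∅ ∨ α.A = ∅) ∧ ¬∃ β, MandatoryArc E β ∧ Subarc α β := by
  obtain ⟨γ, hsub, hγ, hnot⟩ := not_not.mp hα.1
  obtain rfl := hα.2 γ hsub (not_mem_treeMinIdeal hγ hnot)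
  exact ⟨hγ, hnot⟩

lemma MinNonArc.length_eq_two_of_B_eq_empty (hE : IsSepTree E) {α : Arc n}
    (hα : MinNonArc (treeMinIdeal E) α) (hB : α.B = ∅) : (α.b : ℕ) = α.a + 2 := by
  refine hE.length_eq_two_of_minimal α.hab ?_ fun c d hcd hc hd hnot => ?_
  · exact (upSubarcOfMandatory_iff_of_B_eq_empty hB).not.mpr
      hα.upOrDown_and_not_subarc_mandatory.2
  · have hsub : Subarc (upArc c d hcd) α := ⟨hc, hd,
      by rw [α.A_eq_Ioo_of_B_eq_empty hB]; exact Ioo_subset_Ioo hc hd, by simp [upArc]⟩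
    have h := hα.2 _ hsub (not_mem_treeMinIdeal (.inl rfl)
      ((upSubarcOfMandatory_iff_of_B_eq_empty rfl).not.mp hnot))
    exact ⟨congrArg Arc.a h, congrArg Arc.b h⟩

/-- Reversing the edges of the tree exchanges the roles of `A` and `B`. -/
def Arc.swap (α : Arc n) : Arc n :=
  ⟨α.a, α.b, α.B, α.A, α.hab, α.hdisj.symm, by rw [union_comm]; exact α.hunion⟩

lemma Subarc.swap {α β : Arc n} (h : Subarc α β) : Subarc α.swap β.swap :=
  ⟨h.1, h.2.1, h.2.2.2, h.2.2.1⟩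

lemma MandatoryArc.swap {β : Arc n} (h : MandatoryArc E β) :
    MandatoryArc (Function.swap E) β.swap := by
  refine ⟨h.1.symm, fun j h₁ h₂ => ?_⟩
  simp only [reflTransGen_swap]
  exact (h.2 j h₁ h₂).symm

lemma not_mem_treeMinIdeal_swap {α : Arc n} (h : α ∉ treeMinIdeal E) :
    α.swap ∉ treeMinIdeal (Function.swap E) := by
  obtain ⟨γ, hsub, hγ, hnot⟩ := not_not.mp h
  exact fun hI => hI ⟨γ.swap, hsub.swap, hγ.symm,
    fun ⟨β, hm, hs⟩ => hnot ⟨β.swap, hm.swap, hs.swap⟩⟩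

lemma MinNonArc.swap {α : Arc n} (hα : MinNonArc (treeMinIdeal E) α) :
    MinNonArc (treeMinIdeal (Function.swap E)) α.swap := by
  refine ⟨not_mem_treeMinIdeal_swap hα.1, fun β hβ hβI => ?_⟩
  obtain rfl := hα.2 β.swap hβ.swap (not_mem_treeMinIdeal_swap hβI)
  rfl

end MinimalArcs

/-- for a separating tree `E`, the minimal simple congruence `≡_∘` for
which `E` is admissible is a permutree congruence: every subarc-minimal forbidden arc
has length exactly `2`. Key step: if `j - i > 2` and both `u(i, j-1)` and `u(i+1, j)`
are subarcs of mandatory arcs of `E`, then so is `u(i, j)`. -/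
theorem stmt12 {n : ℕ} (E : Fin n → Fin n → Prop) (hE : IsSepTree E) :
    (∀ α : Arc n, MinNonArc (treeMinIdeal E) α → (α.b : ℕ) = (α.a : ℕ) + 2) ∧
    (∀ x x' y' y : Fin n, (x' : ℕ) = (x : ℕ) + 1 → (y : ℕ) = (y' : ℕ) + 1 →
      (x : ℕ) + 2 < (y : ℕ) →
      (∃ γ β : Arc n, UpArcBetween x y' γ ∧ MandatoryArc E β ∧ Subarc γ β) →
      (∃ γ β : Arc n, UpArcBetween x' y γ ∧ MandatoryArc E β ∧ Subarc γ β) →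
      ∃ γ β : Arc n, UpArcBetween x y γ ∧ MandatoryArc E β ∧ Subarc γ β) := by
  refine ⟨fun α hα => ?_, fun x x' y' y hx' hy hxy h₁ h₂ =>
    hE.upSubarcOfMandatory_of_inner hx' hy hxy h₁ h₂⟩
  rcases hα.upOrDown_and_not_subarc_mandatory.1 with hB | hA
  · exact hα.length_eq_two_of_B_eq_empty hE hB
  · exact hα.swap.length_eq_two_of_B_eq_empty hE.swap hA
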